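/- arXiv:2207.13961 — 4 statements merged into one kernel-verified Lean document; each statement's English description precedes it below -/
import Mathlib

section
/- For every real T̂ ≥ 1, the function s ↦ T̂^{s−1}/(s−1) − (ζ*(2s−1)/ζ*(2s))·T̂^{−s}/s tends to π/3 − 1/T̂ as s tends to 0 through values s ≠ 0. (In other words, Zagier's truncated integral formula T̂^{s−1}/(s−1) − (ζ*(2s−1)/ζ*(2s))·T̂^{−s}/s is holomorphic at s = 0 with constant term π/3 − T̂^{−1}.) -/
open Filter Real Topology

lemma aux_tendsto_denom :
    Tendsto (fun s : ℂ => 2 * s * completedRiemannZeta (2 * s)) (𝓝[≠] (0 : ℂ))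
      (𝓝 (-1)) := by
  have hg : Tendsto (fun s : ℂ =>
      2 * s * completedRiemannZeta₀ (2 * s) - 1 - 2 * s / (1 - 2 * s)) (𝓝 (0 : ℂ))
      (𝓝 (-1)) := by
    have h0 : (2 * (0:ℂ) * completedRiemannZeta₀ (2 * 0) - 1 - 2 * 0 / (1 - 2 * 0)) = -1 := by
      simp
    rw [← h0]
    apply ContinuousAt.tendsto
    have hc : ContinuousAt (fun s : ℂ => 2 * s * completedRiemannZeta₀ (2 * s)) 0 := by
      exact (continuousAt_const.mul continuousAt_id).mul
        ((differentiable_completedZeta₀.continuous.comp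
          (continuous_const.mul continuous_id)).continuousAt)
    apply ContinuousAt.sub (hc.sub continuousAt_const)
    apply ContinuousAt.div (by fun_prop) (by fun_prop)
    norm_num
  refine (hg.mono_left nhdsWithin_le_nhds).congr' ?_
  filter_upwards [self_mem_nhdsWithin] with s hs
  have hs' : s ≠ 0 := hs
  have hs2 : (2 : ℂ) * s ≠ 0 := by
    simp [hs']
  rw [completedRiemannZeta_eq]
  field_simp

/-- Zagier's truncated integral formula
`T̂^{s−1}/(s−1) − (ζ*(2s−1)/ζ*(2s))·T̂^{−s}/s` has a removable singularity at `s = 0`,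
with value (constant term) `π/3 − 1/T̂` there. -/
theorem zagier_truncated_formula_limit_at_zero (That : ℝ) (hT : 1 ≤ That) :
    Tendsto (fun s : ℂ =>
        (That : ℂ) ^ (s - 1) / (s - 1) -
          completedRiemannZeta (2 * s - 1) / completedRiemannZeta (2 * s) *
            (That : ℂ) ^ (-s) / s)
      (𝓝[≠] (0 : ℂ)) (𝓝 ((π : ℂ) / 3 - 1 / (That : ℂ))) := by
  have hT0 : (That : ℂ) ≠ 0 := by
    simp only [ne_eq, Complex.ofReal_eq_zero]
    linarith
  have hΛ2 : completedRiemannZeta 2 = (π : ℂ) / 6 := by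
    have h := riemannZeta_def_of_ne_zero (two_ne_zero (α := ℂ))
    have hG : Complex.Gammaℝ 2 = ((π : ℝ) : ℂ)⁻¹ := by
      rw [Complex.Gammaℝ_def]
      norm_num [Complex.Gamma_one, Complex.cpow_neg_one]
    have hπ : ((π : ℝ) : ℂ) ≠ 0 := by
      simp [Real.pi_ne_zero]
    rw [hG] at h
    rw [riemannZeta_two] at h
    field_simp at h ⊢
    exact mul_right_cancel₀ hπ (by linear_combination -(↑π : ℂ) * h :
      6 * completedRiemannZeta 2 * (↑π : ℂ) = ↑π * ↑π)
  have hΛneg1 : completedRiemannZeta (-1) = (π : ℂ) / 6 := by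
    rw [show (-1 : ℂ) = 1 - 2 by ring, completedRiemannZeta_one_sub, hΛ2]
  -- first term
  have h1 : Tendsto (fun s : ℂ => (That : ℂ) ^ (s - 1) / (s - 1)) (𝓝 (0 : ℂ))
      (𝓝 ((That : ℂ) ^ ((0 : ℂ) - 1) / ((0 : ℂ) - 1))) := by
    apply Tendsto.div
    · exact ((continuousAt_const_cpow hT0).comp
        ((continuous_id.sub continuous_const).continuousAt)).tendsto
    · exact (continuous_id.sub continuous_const).continuousAt.tendsto
    · norm_num
  -- numerator of second term
  have h2 : Tendsto (fun s : ℂ =>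
      completedRiemannZeta (2 * s - 1) * (That : ℂ) ^ (-s) * 2) (𝓝 (0 : ℂ))
      (𝓝 (completedRiemannZeta (-1) * 1 * 2)) := by
    apply Tendsto.mul _ tendsto_const_nhds
    apply Tendsto.mul
    · have hd : DifferentiableAt ℂ completedRiemannZeta (-1) :=
        differentiableAt_completedZeta (by norm_num) (by norm_num)
      exact hd.continuousAt.tendsto.comp
        (((continuous_const.mul continuous_id).sub continuous_const).tendsto'
          0 (-1) (by norm_num))
    · have := (continuousAt_const_cpow hT0).tendsto.comp
        (continuous_neg.continuousAt (x := (0 : ℂ)).tendsto)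
      simpa [Complex.cpow_zero, Function.comp_def] using this
  have h3 : Tendsto (fun s : ℂ =>
      (That : ℂ) ^ (s - 1) / (s - 1) -
        completedRiemannZeta (2 * s - 1) * (That : ℂ) ^ (-s) * 2 /
          (2 * s * completedRiemannZeta (2 * s)))
      (𝓝[≠] (0 : ℂ))
      (𝓝 ((That : ℂ) ^ ((0 : ℂ) - 1) / ((0 : ℂ) - 1) -
        completedRiemannZeta (-1) * 1 * 2 / (-1))) := by
    exact (h1.mono_left nhdsWithin_le_nhds).sub
      (((h2.mono_left nhdsWithin_le_nhds).div aux_tendsto_denom (by norm_num)))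
  have hval : (That : ℂ) ^ ((0 : ℂ) - 1) / ((0 : ℂ) - 1) -
      completedRiemannZeta (-1) * 1 * 2 / (-1) = (π : ℂ) / 3 - 1 / (That : ℂ) := by
    rw [hΛneg1, show (0 : ℂ) - 1 = -1 by ring, Complex.cpow_neg_one]
    field_simp
    ring
  rw [← hval]
  refine h3.congr fun s => ?_
  congr 1
  rw [div_mul_eq_mul_div, div_div,
    show completedRiemannZeta (2 * s - 1) * (That : ℂ) ^ (-s) * 2
      = 2 * (completedRiemannZeta (2 * s - 1) * (That : ℂ) ^ (-s)) by ring,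
    show 2 * s * completedRiemannZeta (2 * s) = 2 * (s * completedRiemannZeta (2 * s)) by ring,
    mul_div_mul_left _ _ (two_ne_zero (α := ℂ)), mul_comm s (completedRiemannZeta (2 * s))]
end

section
/- The function s ↦ ζ*(2s−1)/(s·ζ*(2s)) tends to −π/3 as s tends to 0 through values s ≠ 0. -/
open Filter Real Topology

lemma completedRiemannZeta_two : completedRiemannZeta 2 = (π : ℂ) / 6 := by
  have h := riemannZeta_def_of_ne_zero (s := 2) two_ne_zero
  have hG : Complex.Gammaℝ 2 = (π : ℂ)⁻¹ := by
    rw [Complex.Gammaℝ_def]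
    norm_num
    exact Complex.cpow_neg_one _
  have hπ : (π:ℂ) ≠ 0 := Complex.ofReal_ne_zero.mpr Real.pi_ne_zero
  have h2 : completedRiemannZeta 2 = riemannZeta 2 * Complex.Gammaℝ 2 := by
    rw [h, hG]; field_simp
  rw [h2, riemannZeta_two, hG]
  field_simp

/-- The function `s ↦ ζ*(2s−1)/(s·ζ*(2s))` tends to `−π/3` as `s → 0`, `s ≠ 0`. -/
theorem completedZeta_quotient_limit_at_zero :
    Tendsto (fun s : ℂ =>
        completedRiemannZeta (2 * s - 1) / (s * completedRiemannZeta (2 * s)))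
      (𝓝[≠] (0 : ℂ)) (𝓝 (-(π : ℂ) / 3)) := by
  have hnum : Tendsto (fun s : ℂ => completedRiemannZeta (2 * s - 1)) (𝓝[≠] (0 : ℂ))
      (𝓝 ((π : ℂ) / 6)) := by
    have hd : DifferentiableAt ℂ completedRiemannZeta (-1) :=
      differentiableAt_completedZeta (by norm_num) (by norm_num)
    have h1 : Tendsto (fun s : ℂ => 2 * s - 1) (𝓝 (0:ℂ)) (𝓝 (-1 : ℂ)) := by
      have hcont : Continuous (fun s : ℂ => 2 * s - 1) := by continuity
      simpa using hcont.tendsto 0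
    have hc := hd.continuousAt.tendsto.comp h1
    have h0 : completedRiemannZeta (-1) = (π : ℂ) / 6 := by
      rw [show (-1 : ℂ) = 1 - 2 by ring, completedRiemannZeta_one_sub, completedRiemannZeta_two]
    exact tendsto_nhdsWithin_of_tendsto_nhds (h0 ▸ hc)
  have hden : Tendsto (fun s : ℂ => s * completedRiemannZeta (2 * s)) (𝓝[≠] (0 : ℂ))
      (𝓝 (-(1/2) : ℂ)) := by
    have heq : ∀ s : ℂ, s ≠ 0 →
        s * completedRiemannZeta (2 * s)
          = s * completedRiemannZeta₀ (2 * s) - 1/2 - s / (1 - 2 * s) := by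
      intro s hs
      rw [completedRiemannZeta_eq]
      field_simp
    have h2 : Tendsto (fun s : ℂ => s * completedRiemannZeta₀ (2 * s) - 1/2 - s / (1 - 2 * s))
        (𝓝 (0 : ℂ)) (𝓝 (-(1/2) : ℂ)) := by
      have : ContinuousAt (fun s : ℂ => s * completedRiemannZeta₀ (2 * s) - 1/2 - s / (1 - 2 * s))
          0 := by
        apply ContinuousAt.sub
        apply ContinuousAt.sub
        · exact continuousAt_id.mul
            ((differentiable_completedZeta₀.continuous.comp
              (continuous_const.mul continuous_id)).continuousAt)
        · exact continuousAt_const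
        · exact ContinuousAt.div continuousAt_id
            (continuousAt_const.sub (continuous_const.mul continuous_id).continuousAt)
            (by norm_num)
      have h0 : (0:ℂ) * completedRiemannZeta₀ (2 * 0) - 1/2 - 0 / (1 - 2 * 0) = -(1/2) := by
        norm_num
      exact h0 ▸ this.tendsto
    refine (tendsto_nhdsWithin_of_tendsto_nhds h2).congr' ?_
    filter_upwards [self_mem_nhdsWithin] with s hs
    exact (heq s hs).symm
  have := hnum.div hden (by norm_num)
  convert this using 2
  norm_num
  field_simp
  ring
end

section
/- The function s ↦ √(2π)·2^{−s}·Γ(s)·ζ(2s)/ζ(2s+1) has a simple pole at s = 1/2 with residue 3/π, and the constant term of its Laurent expansion at s = 1/2 equals 3·(−12ζ'(2) + 2γπ² + π²(−γ − log 8))/π³, where γ is the Euler–Mascheroni constant and ζ'(2) is the derivative of the Riemann zeta function at 2. Precisely, √(2π)·2^{−s}·Γ(s)·ζ(2s)/ζ(2s+1) − (3/π)/(s − 1/2) tends to 3·(−12ζ'(2) + 2γπ² + π²(−γ − log 8))/π³ as s tends to 1/2 through values s ≠ 1/2. -/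
open Filter Real Topology Complex

/-- The function `s ↦ √(2π)·2^{−s}·Γ(s)·ζ(2s)/ζ(2s+1)` has a simple pole at `s = 1/2`
with residue `3/π`, and the constant term of its Laurent expansion there equals
`3·(−12ζ'(2) + 2γπ² + π²(−γ − log 8))/π³`, with `γ` the Euler–Mascheroni constant. -/
theorem constant_term_eisenstein_coefficient_at_half :
    Tendsto (fun s : ℂ =>
        (Real.sqrt (2 * π) : ℂ) * (2 : ℂ) ^ (-s) * Complex.Gamma s *
            riemannZeta (2 * s) / riemannZeta (2 * s + 1) -
          (3 / (π : ℂ)) / (s - 1 / 2))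
      (𝓝[≠] ((1 : ℂ) / 2))
      (𝓝 (3 * (-12 * deriv riemannZeta 2 +
            2 * (Real.eulerMascheroniConstant : ℂ) * (π : ℂ) ^ 2 +
            (π : ℂ) ^ 2 * (-(Real.eulerMascheroniConstant : ℂ) - Real.log 8)) /
          (π : ℂ) ^ 3)) := by
  have hπ0 : (π : ℂ) ≠ 0 := Complex.ofReal_ne_zero.mpr Real.pi_ne_zero
  have hζ2 : riemannZeta 2 = (π : ℂ) ^ 2 / 6 := riemannZeta_two
  have hζ2ne : riemannZeta 2 ≠ 0 := by
    rw [hζ2]; exact div_ne_zero (pow_ne_zero 2 hπ0) (by norm_num)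
  have hs2 : (Real.sqrt 2 : ℂ) ≠ 0 := by
    exact_mod_cast Real.sqrt_ne_zero'.mpr two_pos
  have hsπmul : (Real.sqrt π : ℂ) * (Real.sqrt π : ℂ) = (π : ℂ) := by
    rw [← Complex.ofReal_mul, Real.mul_self_sqrt Real.pi_pos.le]
  have hC : (Real.sqrt (2 * π) : ℂ) = (Real.sqrt 2 : ℂ) * (Real.sqrt π : ℂ) := by
    rw [← Complex.ofReal_mul, Real.sqrt_mul (by norm_num) π]
  have h2pow : (2 : ℂ) ^ (-(1/2 : ℂ)) = ((Real.sqrt 2 : ℂ))⁻¹ := by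
    rw [show (-(1/2 : ℂ)) = ((-(1/2) : ℝ) : ℂ) by norm_num,
      show (2 : ℂ) = ((2 : ℝ) : ℂ) by norm_num,
      ← Complex.ofReal_cpow (by norm_num : (0:ℝ) ≤ 2)]
    rw [Real.rpow_neg (by norm_num : (0:ℝ) ≤ 2), ← Real.sqrt_eq_rpow]
    push_cast
    ring
  have hΓhalf : Complex.Gamma (1/2) = (Real.sqrt π : ℂ) := by
    rw [Complex.Gamma_one_half_eq, show ((1:ℂ)/2) = ((1/2 : ℝ) : ℂ) by norm_num,
      ← Complex.ofReal_cpow Real.pi_pos.le, Real.sqrt_eq_rpow]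
  have hlog2 : Complex.log 2 = (Real.log 2 : ℂ) := by
    rw [show (2 : ℂ) = ((2 : ℝ) : ℂ) by norm_num, Complex.ofReal_log (by norm_num : (0:ℝ) ≤ 2)]
  have hlog8 : (Real.log 8 : ℂ) = 3 * (Real.log 2 : ℂ) := by
    rw [show (8 : ℝ) = 2 ^ (3:ℕ) by norm_num, Real.log_pow]
    push_cast; ring
  have e1 : (Real.sqrt 2 : ℂ) * (Real.sqrt π : ℂ) * ((Real.sqrt 2 : ℂ))⁻¹
      = (Real.sqrt π : ℂ) := by
    rw [mul_comm (Real.sqrt 2 : ℂ) (Real.sqrt π : ℂ), mul_assoc, mul_inv_cancel₀ hs2, mul_one]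
  have t3 : (Real.sqrt (2 * π) : ℂ) * (2:ℂ) ^ (-(1/2:ℂ)) * Complex.Gamma (1/2) = (π : ℂ) := by
    rw [hC, h2pow, hΓhalf, e1, hsπmul]
  have t1 : (Real.sqrt (2 * π) : ℂ) * ((2:ℂ) ^ (-(1/2:ℂ)) * Complex.log 2 * (-1)) *
      Complex.Gamma (1/2) = -((π : ℂ) * (Real.log 2 : ℂ)) := by
    rw [hC, h2pow, hΓhalf, hlog2]
    calc (Real.sqrt 2 : ℂ) * (Real.sqrt π : ℂ) * (((Real.sqrt 2 : ℂ))⁻¹ * (Real.log 2 : ℂ) * (-1)) *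
          (Real.sqrt π : ℂ)
        = (Real.sqrt 2 : ℂ) * (Real.sqrt π : ℂ) * ((Real.sqrt 2 : ℂ))⁻¹ *
          (Real.sqrt π : ℂ) * (Real.log 2 : ℂ) * (-1) := by ring
      _ = -((π : ℂ) * (Real.log 2 : ℂ)) := by rw [e1]; rw [hsπmul]; ring
  have t2 : (Real.sqrt (2 * π) : ℂ) * (2:ℂ) ^ (-(1/2:ℂ)) *
      (-(Real.sqrt π : ℂ) * ((Real.eulerMascheroniConstant : ℂ) + 2 * Complex.log 2)) =
      -((π : ℂ) * ((Real.eulerMascheroniConstant : ℂ) + 2 * (Real.log 2 : ℂ))) := by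
    rw [hC, h2pow, hlog2]
    calc (Real.sqrt 2 : ℂ) * (Real.sqrt π : ℂ) * ((Real.sqrt 2 : ℂ))⁻¹ *
          (-(Real.sqrt π : ℂ) * ((Real.eulerMascheroniConstant : ℂ) + 2 * (Real.log 2 : ℂ)))
        = (Real.sqrt 2 : ℂ) * (Real.sqrt π : ℂ) * ((Real.sqrt 2 : ℂ))⁻¹ * (Real.sqrt π : ℂ) *
          (-((Real.eulerMascheroniConstant : ℂ) + 2 * (Real.log 2 : ℂ))) := by ring
      _ = _ := by rw [e1, hsπmul]; ring
  -- derivative of numerator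
  have hu : HasDerivAt (fun s : ℂ => (2:ℂ) ^ (-s))
      ((2:ℂ) ^ (-(1/2:ℂ)) * Complex.log 2 * (-1)) ((1:ℂ)/2) := by
    have := (hasDerivAt_neg ((1:ℂ)/2)).const_cpow (c := 2) (Or.inl two_ne_zero)
    simpa using this
  have hN : HasDerivAt
      (fun s : ℂ => (Real.sqrt (2 * π) : ℂ) * (2:ℂ) ^ (-s) * Complex.Gamma s)
      ((Real.sqrt (2 * π) : ℂ) * ((2:ℂ) ^ (-(1/2:ℂ)) * Complex.log 2 * (-1)) *
          Complex.Gamma (1/2) +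
        (Real.sqrt (2 * π) : ℂ) * (2:ℂ) ^ (-(1/2:ℂ)) *
          (-(Real.sqrt π : ℂ) * ((Real.eulerMascheroniConstant : ℂ) + 2 * Complex.log 2)))
      ((1:ℂ)/2) :=
    (hu.const_mul _).mul Complex.hasDerivAt_Gamma_one_half
  -- derivative of denominator
  have hz : HasDerivAt riemannZeta (deriv riemannZeta 2) 2 :=
    (differentiableAt_riemannZeta (by norm_num)).hasDerivAt
  have hin : HasDerivAt (fun s : ℂ => 2 * s + 1) 2 ((1:ℂ)/2) := by
    simpa using ((hasDerivAt_id ((1:ℂ)/2)).const_mul 2).add_const 1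
  have hv : HasDerivAt (fun s : ℂ => riemannZeta (2 * s + 1))
      (deriv riemannZeta 2 * 2) ((1:ℂ)/2) := by
    have hz' : HasDerivAt riemannZeta (deriv riemannZeta 2) ((2:ℂ) * ((1:ℂ)/2) + 1) := by
      rw [show (2:ℂ) * ((1:ℂ)/2) + 1 = 2 by norm_num]; exact hz
    have := HasDerivAt.comp ((1:ℂ)/2) hz' hin
    exact this
  have hvne : riemannZeta (2 * ((1:ℂ)/2) + 1) ≠ 0 := by
    rw [show (2:ℂ) * ((1:ℂ)/2) + 1 = 2 by norm_num]; exact hζ2ne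
  set g : ℂ → ℂ := fun s =>
    (Real.sqrt (2 * π) : ℂ) * (2:ℂ) ^ (-s) * Complex.Gamma s / riemannZeta (2 * s + 1)
    with hgdef
  have hgval : g ((1:ℂ)/2) = 6 / (π : ℂ) := by
    rw [hgdef]
    simp only
    rw [show (2:ℂ) * ((1:ℂ)/2) + 1 = 2 by norm_num, hζ2, t3]
    field_simp
  have hg : HasDerivAt g
      (-(6 * ((Real.eulerMascheroniConstant : ℂ) + 3 * (Real.log 2 : ℂ))) / (π : ℂ) -
        72 * deriv riemannZeta 2 / (π : ℂ) ^ 3) ((1:ℂ)/2) := by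
    have raw := hN.div hv hvne
    refine HasDerivAt.congr_deriv raw ?_
    rw [show (2:ℂ) * ((1:ℂ)/2) + 1 = 2 by norm_num, hζ2, t1, t2, t3]
    field_simp
    ring
  -- limits
  have hmap : Tendsto (fun s : ℂ => 2 * s) (𝓝[≠] ((1:ℂ)/2)) (𝓝[≠] (1:ℂ)) := by
    refine tendsto_nhdsWithin_of_tendsto_nhds_of_eventually_within _ ?_ ?_
    · have h : Tendsto (fun s : ℂ => 2 * s) (𝓝 ((1:ℂ)/2)) (𝓝 (2 * ((1:ℂ)/2))) :=
        (continuous_const.mul continuous_id).tendsto _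
      simpa using h.mono_left nhdsWithin_le_nhds
    · filter_upwards [self_mem_nhdsWithin] with s hs
      simp only [Set.mem_compl_iff, Set.mem_singleton_iff] at hs ⊢
      intro h
      exact hs (by linear_combination h / 2)
  have hzetalim : Tendsto (fun s : ℂ => riemannZeta (2*s) - 1/(2*s - 1)) (𝓝[≠] ((1:ℂ)/2))
      (𝓝 (Real.eulerMascheroniConstant : ℂ)) := by
    have := tendsto_riemannZeta_sub_one_div.comp hmap
    simpa [Function.comp_def] using this
  have hgc : Tendsto g (𝓝[≠] ((1:ℂ)/2)) (𝓝 (g ((1:ℂ)/2))) :=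
    hg.continuousAt.tendsto.mono_left nhdsWithin_le_nhds
  have T1 : Tendsto (fun s : ℂ => g s * (riemannZeta (2*s) - 1/(2*s - 1))) (𝓝[≠] ((1:ℂ)/2))
      (𝓝 (g ((1:ℂ)/2) * (Real.eulerMascheroniConstant : ℂ))) := hgc.mul hzetalim
  have T2 : Tendsto (fun s : ℂ => slope g ((1:ℂ)/2) s / 2) (𝓝[≠] ((1:ℂ)/2))
      (𝓝 ((-(6 * ((Real.eulerMascheroniConstant : ℂ) + 3 * (Real.log 2 : ℂ))) / (π : ℂ) -
        72 * deriv riemannZeta 2 / (π : ℂ) ^ 3) / 2)) :=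
    (hasDerivAt_iff_tendsto_slope.mp hg).div_const 2
  have key := T1.add T2
  have hval : (3 * (-12 * deriv riemannZeta 2 +
        2 * (Real.eulerMascheroniConstant : ℂ) * (π : ℂ) ^ 2 +
        (π : ℂ) ^ 2 * (-(Real.eulerMascheroniConstant : ℂ) - Real.log 8)) / (π : ℂ) ^ 3)
      = g ((1:ℂ)/2) * (Real.eulerMascheroniConstant : ℂ) +
        (-(6 * ((Real.eulerMascheroniConstant : ℂ) + 3 * (Real.log 2 : ℂ))) / (π : ℂ) -
          72 * deriv riemannZeta 2 / (π : ℂ) ^ 3) / 2 := by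
    have hπinv : (π:ℂ) * ((π:ℂ))⁻¹ = 1 := mul_inv_cancel₀ hπ0
    rw [hgval, hlog8]
    linear_combination (3 * ((Real.eulerMascheroniConstant : ℂ) - 3 * (Real.log 2 : ℂ)) *
      ((π:ℂ))⁻¹ * ((π:ℂ) * ((π:ℂ))⁻¹ + 1)) * hπinv
  rw [hval]
  refine Tendsto.congr' ?_ key
  filter_upwards [self_mem_nhdsWithin] with s hs
  simp only [Set.mem_compl_iff, Set.mem_singleton_iff] at hs
  have hs1 : s - 1/2 ≠ 0 := sub_ne_zero.mpr hs
  have hinv : ((2:ℂ)*s - 1)⁻¹ = (s - 1/2)⁻¹ / 2 := by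
    rw [show (2:ℂ)*s - 1 = 2*(s - 1/2) by ring, mul_inv]
    ring
  rw [slope_def_field, hgval, hgdef]
  simp only [div_eq_mul_inv, hinv]
  ring
end

section
/- Let f : ℂ → ℂ be holomorphic on the upper half plane {z ∈ ℂ : Im z > 0} and satisfy f(z + 1) = f(z) for all z with Im z > 0. Then the constant Fourier coefficient ∫_{−1/2}^{1/2} f(u + iv) du is independent of v: for all real v₁ > 0 and v₂ > 0, ∫_{−1/2}^{1/2} f(u + iv₁) du = ∫_{−1/2}^{1/2} f(u + iv₂) du. -/
open Complex intervalIntegral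

/-- For a function `f` holomorphic on the upper half plane and `1`-periodic there, the
constant Fourier coefficient `∫_{-1/2}^{1/2} f(u+iv) du` is independent of `v > 0`. -/
theorem constant_fourier_coefficient_independent_of_height (f : ℂ → ℂ)
    (hf : ∀ z : ℂ, 0 < z.im → DifferentiableAt ℂ f z)
    (hper : ∀ z : ℂ, 0 < z.im → f (z + 1) = f z)
    (v₁ v₂ : ℝ) (hv₁ : 0 < v₁) (hv₂ : 0 < v₂) :
    (∫ u in (-(1 : ℝ) / 2)..(1 / 2), f (↑u + ↑v₁ * Complex.I)) =
      ∫ u in (-(1 : ℝ) / 2)..(1 / 2), f (↑u + ↑v₂ * Complex.I) := by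
  set z : ℂ := -(1 : ℝ) / 2 + v₁ * Complex.I with hz
  set w : ℂ := (1 : ℝ) / 2 + v₂ * Complex.I with hw
  have hzre : z.re = -(1 : ℝ) / 2 := by simp [hz]
  have hwre : w.re = (1 : ℝ) / 2 := by simp [hw]
  have hzim : z.im = v₁ := by simp [hz]
  have hwim : w.im = v₂ := by simp [hw]
  have key := Complex.integral_boundary_rect_eq_zero_of_differentiableOn f z w ?_
  · rw [hzre, hwre, hzim, hwim] at key
    have hvert : (∫ y : ℝ in v₁..v₂, f (((1:ℝ)/2 : ℝ) + y * Complex.I)) =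
        ∫ y : ℝ in v₁..v₂, f ((-(1:ℝ)/2 : ℝ) + y * Complex.I) := by
      apply intervalIntegral.integral_congr
      intro y hy
      have hypos : 0 < y := by
        rcases Set.mem_uIcc.mp hy with h | h
        · exact lt_of_lt_of_le hv₁ h.1
        · exact lt_of_lt_of_le hv₂ h.1
      have := hper ((-(1:ℝ)/2 : ℝ) + y * Complex.I) (by simp [hypos])
      have heq : ((-(1:ℝ)/2 : ℝ) : ℂ) + y * Complex.I + 1 =
          ((1:ℝ)/2 : ℝ) + y * Complex.I := by push_cast; ring
      rw [heq] at this
      exact this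
    rw [hvert] at key
    have : (∫ x : ℝ in (-(1:ℝ)/2)..(1/2), f (x + v₁ * Complex.I)) -
        (∫ x : ℝ in (-(1:ℝ)/2)..(1/2), f (x + v₂ * Complex.I)) = 0 := by
      linear_combination key
    exact sub_eq_zero.mp this
  · intro x hx
    apply (hf x ?_).differentiableWithinAt
    have : x.im ∈ Set.uIcc z.im w.im := hx.2
    rw [hzim, hwim] at this
    rcases Set.mem_uIcc.mp this with h | h
    · exact lt_of_lt_of_le hv₁ h.1
    · exact lt_of_lt_of_le hv₂ h.1
end
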